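/- Suppose a double complex D^{*,*} of R-modules has exact columns. Then its left truncated totalisation ltTot(D), with n-th term the left truncated product ltΠ_p D^{p,n-p} = ⊕_{p<0} D^{p,n-p} ⊕ Π_{p≥0} D^{p,n-p} and differential induced by d_h + d_v, is acyclic. -/

import Mathlib

/-- Transport along equalities of indices of a doubly indexed family of modules. -/
def castM {R : Type} [Ring R] (D : ℤ → ℤ → Type)
    [∀ p q, AddCommGroup (D p q)] [∀ p q, Module R (D p q)] :
    ∀ {p q p' q' : ℤ}, p = p' → q = q' → (D p q →ₗ[R] D p' q')
  | _, _, _, _, rfl, rfl => LinearMap.id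

/-- The differential `d_h + d_v` of the totalisation of a double complex, with `n`-th term
the full product `∀ p, D p (n - p)`.  Restricted to elements whose support is bounded below
(in `p`) this is the differential of the left truncated totalisation `ltTot`. -/
def totd {R : Type} [Ring R] (D : ℤ → ℤ → Type)
    [∀ p q, AddCommGroup (D p q)] [∀ p q, Module R (D p q)]
    (dh : ∀ p q, D p q →ₗ[R] D (p + 1) q) (dv : ∀ p q, D p q →ₗ[R] D p (q + 1))
    (n : ℤ) : (∀ p, D p (n - p)) →ₗ[R] (∀ p, D p (n + 1 - p)) :=
  LinearMap.pi fun p =>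
    (castM D (by omega : p - 1 + 1 = p) (by omega : n - (p - 1) = n + 1 - p)).comp
        ((dh (p - 1) (n - (p - 1))).comp (LinearMap.proj (p - 1)))
      + (castM D rfl (by omega : n - p + 1 = n + 1 - p)).comp
        ((dv p (n - p)).comp (LinearMap.proj p))

/-! Let `a` be a cocycle vanishing in columns `p < k`. We build cochains `b m` with
`totd (b m) = a` in columns `p < k + m`, each obtained from the previous one by changing only its
component in column `k + m`: as `totd ∘ totd = 0`, the error `a - totd (b m)` is a cocycle
vanishing in columns `p < k + m`, so its component in column `k + m` is `dv`-closed, hence `dv y`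
for some `y` since the columns are exact, and adding `y` in column `k + m` repairs that column.
Each component of `b m` is eventually constant in `m`, and the limit is the required primitive. -/

theorem exists_seq_of_forall_exists_succ {α : Type*} {P : ℕ → α → Prop}
    {R : ℕ → α → α → Prop} {x₀ : α} (h₀ : P 0 x₀)
    (h : ∀ m x, P m x → ∃ y, P (m + 1) y ∧ R m x y) :
    ∃ f : ℕ → α, (∀ m, P m (f m)) ∧ ∀ m, R m (f m) (f (m + 1)) := by
  have h' : ∀ m x, ∃ y, P m x → P (m + 1) y ∧ R m x y := fun m x => by
    by_cases hx : P m x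
    · obtain ⟨y, hy⟩ := h m x hx
      exact ⟨y, fun _ => hy⟩
    · exact ⟨x, fun hx' => absurd hx' hx⟩
  choose g hg using h'
  let f : ℕ → α := fun m => Nat.rec x₀ g m
  have hf : ∀ m, P m (f m) := fun m => by
    induction m with
    | zero => exact h₀
    | succ m ih => exact (hg m (f m) ih).1
  exact ⟨f, hf, fun m => (hg m (f m) (hf m)).2⟩

theorem exists_limit_of_succ_eq_of_ne {F : ℤ → Type*} (b : ℕ → ∀ p, F p) (k : ℤ)
    (hb : ∀ (m : ℕ) p, p ≠ k + m → b (m + 1) p = b m p) :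
    ∃ B : ∀ p, F p, ∀ (m : ℕ) p, p < k + m → B p = b m p := by
  refine ⟨fun p => b (p - k + 1).toNat p, fun m p hp => ?_⟩
  obtain ⟨j, rfl⟩ : ∃ j, m = (p - k + 1).toNat + j := ⟨m - (p - k + 1).toNat, by omega⟩
  induction j with
  | zero => rfl
  | succ j ih =>
    rw [← add_assoc, hb _ p (by omega), ih (by omega)]

section DoubleComplex

variable {R : Type} [Ring R] {D : ℤ → ℤ → Type} [∀ p q, AddCommGroup (D p q)]
  [∀ p q, Module R (D p q)]
  {dh : ∀ p q, D p q →ₗ[R] D (p + 1) q} {dv : ∀ p q, D p q →ₗ[R] D p (q + 1)}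

@[simp]
theorem castM_refl {p q : ℤ} (x : D p q) : castM (R := R) D rfl rfl x = x := rfl

@[simp]
theorem castM_castM {p q p' q' p'' q'' : ℤ} (h₁ : p = p') (h₂ : q = q')
    (h₃ : p' = p'') (h₄ : q' = q'') (x : D p q) :
    castM (R := R) D h₃ h₄ (castM (R := R) D h₁ h₂ x) =
      castM (R := R) D (h₁.trans h₃) (h₂.trans h₄) x := by
  subst h₁ h₂ h₃ h₄; rfl

@[simp]
theorem castM_eq_zero_iff {p q p' q' : ℤ} (h₁ : p = p') (h₂ : q = q') {x : D p q} :
    castM (R := R) D h₁ h₂ x = 0 ↔ x = 0 := by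
  subst h₁ h₂; rfl

theorem dh_castM {p q p' q' : ℤ} (h₁ : p = p') (h₂ : q = q') (x : D p q) :
    dh p' q' (castM (R := R) D h₁ h₂ x) =
      castM (R := R) D (congrArg (· + 1) h₁) h₂ (dh p q x) := by
  subst h₁ h₂; rfl

theorem dv_castM {p q p' q' : ℤ} (h₁ : p = p') (h₂ : q = q') (x : D p q) :
    dv p' q' (castM (R := R) D h₁ h₂ x) =
      castM (R := R) D h₁ (congrArg (· + 1) h₂) (dv p q x) := by
  subst h₁ h₂; rfl


theorem totd_apply (n : ℤ) (b : ∀ p, D p (n - p)) (p : ℤ) :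
    totd D dh dv n b p =
      castM (R := R) D (by omega) (by omega) (dh (p - 1) (n - (p - 1)) (b (p - 1))) +
        castM (R := R) D rfl (by omega) (dv p (n - p) (b p)) :=
  rfl

theorem totd_apply_congr {n : ℤ} {b b' : ∀ p, D p (n - p)} {p : ℤ}
    (h₁ : b (p - 1) = b' (p - 1)) (h₂ : b p = b' p) :
    totd D dh dv n b p = totd D dh dv n b' p := by
  rw [totd_apply, totd_apply, h₁, h₂]

theorem totd_single_apply_of_lt {n p q : ℤ} (y : D p (n - p)) (hq : q < p) :
    totd D dh dv n (Pi.single p y) q = 0 := by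
  rw [totd_apply, Pi.single_eq_of_ne (by omega), Pi.single_eq_of_ne (by omega)]
  simp

theorem totd_single_apply_self {n p : ℤ} (y : D p (n - p)) :
    totd D dh dv n (Pi.single p y) p = castM (R := R) D rfl (by omega) (dv p (n - p) y) := by
  rw [totd_apply, Pi.single_eq_of_ne (by omega), Pi.single_eq_same]
  simp

theorem totd_totd (hdh : ∀ p q (x : D p q), dh (p + 1) q (dh p q x) = 0)
    (hdv : ∀ p q (x : D p q), dv p (q + 1) (dv p q x) = 0)
    (hanti : ∀ p q (x : D p q), dh p (q + 1) (dv p q x) + dv (p + 1) q (dh p q x) = 0)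
    (n : ℤ) (b : ∀ p, D p (n - p)) :
    totd D dh dv (n + 1) (totd D dh dv n b) = 0 := by
  funext p
  simp only [totd_apply, map_add, dh_castM, dv_castM, castM_castM, hdh, hdv, map_zero,
    zero_add, add_zero, Pi.zero_apply]
  rw [← map_add, hanti, map_zero]


theorem exists_totd_single_eq_of_totd_eq_zero
    (hcols : ∀ p q (x : D p (q + 1)), dv p (q + 1) x = 0 → ∃ y : D p q, dv p q y = x)
    {n p : ℤ} {r : ∀ q, D q (n + 1 - q)} (hr : totd D dh dv (n + 1) r = 0)
    (hr₀ : ∀ q < p, r q = 0) :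
    ∃ y : D p (n - p), ∀ q ≤ p, totd D dh dv n (Pi.single p y) q = r q := by
  have hclosed : dv p (n - p + 1) (castM (R := R) D rfl (by omega) (r p)) = 0 := by
    have h := congrFun hr p
    rw [totd_apply, hr₀ (p - 1) (by omega), map_zero, map_zero, zero_add,
      Pi.zero_apply, castM_eq_zero_iff] at h
    rw [dv_castM, h, map_zero]
  obtain ⟨y, hy⟩ := hcols p (n - p) _ hclosed
  refine ⟨y, fun q hq => ?_⟩
  rcases hq.lt_or_eq with hq | rfl
  · rw [totd_single_apply_of_lt y hq, hr₀ q hq]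
  · rw [totd_single_apply_self, hy, castM_castM, castM_refl]

variable (hdh : ∀ p q (x : D p q), dh (p + 1) q (dh p q x) = 0)
  (hdv : ∀ p q (x : D p q), dv p (q + 1) (dv p q x) = 0)
  (hanti : ∀ p q (x : D p q), dh p (q + 1) (dv p q x) + dv (p + 1) q (dh p q x) = 0)
  (hcols : ∀ p q (x : D p (q + 1)), dv p (q + 1) x = 0 → ∃ y : D p q, dv p q y = x)
include hdh hdv hanti hcols

theorem exists_totd_add_single_eq {n s : ℤ} {a : ∀ p, D p (n + 1 - p)}
    (ha : totd D dh dv (n + 1) a = 0) {c : ∀ p, D p (n - p)}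
    (hc : ∀ p < s, totd D dh dv n c p = a p) :
    ∃ y : D s (n - s), ∀ p ≤ s, totd D dh dv n (c + Pi.single s y) p = a p := by
  have hr : totd D dh dv (n + 1) (a - totd D dh dv n c) = 0 := by
    rw [map_sub, totd_totd hdh hdv hanti, ha, sub_zero]
  obtain ⟨y, hy⟩ := exists_totd_single_eq_of_totd_eq_zero hcols hr
    (fun p hp => by rw [Pi.sub_apply, hc p hp, sub_self])
  refine ⟨y, fun p hp => ?_⟩
  rw [map_add, Pi.add_apply, hy p hp, Pi.sub_apply, add_sub_cancel]

theorem exists_totd_eq_of_totd_eq_zero {n k : ℤ} {a : ∀ p, D p (n + 1 - p)}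
    (ha₀ : ∀ p < k, a p = 0) (ha : totd D dh dv (n + 1) a = 0) :
    ∃ b : ∀ p, D p (n - p), (∀ p < k, b p = 0) ∧ totd D dh dv n b = a := by
  obtain ⟨b, hb, hb_succ⟩ := exists_seq_of_forall_exists_succ
    (P := fun (m : ℕ) c => (∀ p < k, c p = 0) ∧ ∀ p < k + m, totd D dh dv n c p = a p)
    (R := fun m c c' => ∀ p, p ≠ k + m → c' p = c p) (x₀ := 0)
    ⟨fun _ _ => rfl, fun p hp => by rw [map_zero, ha₀ p (by omega)]; rfl⟩
    (fun m c ⟨hc₀, hc⟩ => by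
      obtain ⟨y, hy⟩ := exists_totd_add_single_eq hdh hdv hanti hcols ha hc
      have hupdate : ∀ p, p ≠ k + m →
          (c + Pi.single (k + m) y : ∀ p, D p (n - p)) p = c p := fun p hp => by
        rw [Pi.add_apply, Pi.single_eq_of_ne hp, add_zero]
      exact ⟨_, ⟨fun p hp => by rw [hupdate p (by omega), hc₀ p hp],
        fun p hp => hy p (by push_cast at hp; omega)⟩, hupdate⟩)
  obtain ⟨B, hB⟩ := exists_limit_of_succ_eq_of_ne b k hb_succ
  refine ⟨B, fun p hp => by rw [hB 0 p (by omega), (hb 0).1 p hp], funext fun p => ?_⟩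
  have hM : p < k + ((p - k + 1).toNat : ℕ) := by omega
  rw [totd_apply_congr (hB _ (p - 1) (by omega)) (hB _ p hM), (hb _).2 p hM]

end DoubleComplex

/-- Suppose a double complex `D` of `R`-modules (anticommuting differentials squaring to
zero) has exact columns.  Then its left truncated totalisation — whose `n`-th term consists of
the elements of `∀ p, D p (n - p)` which vanish for `p` sufficiently small — is acyclic:
every left-truncated cocycle is the boundary of a left-truncated element. -/
theorem ltTot_acyclic_of_exact_columns (R : Type) [Ring R]
    (D : ℤ → ℤ → Type)
    [∀ p q, AddCommGroup (D p q)] [∀ p q, Module R (D p q)]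
    (Dh : ∀ p q, D p q →ₗ[R] D (p + 1) q) (Dv : ∀ p q, D p q →ₗ[R] D p (q + 1))
    (hDhh : ∀ p q (x : D p q), Dh (p + 1) q (Dh p q x) = 0)
    (hDvv : ∀ p q (x : D p q), Dv p (q + 1) (Dv p q x) = 0)
    (hDanti : ∀ p q (x : D p q), Dh p (q + 1) (Dv p q x) + Dv (p + 1) q (Dh p q x) = 0)
    -- the columns are exact:
    (hcols : ∀ p q (x : D p (q + 1)), Dv p (q + 1) x = 0 → ∃ y : D p q, Dv p q y = x) :
    ∀ (n : ℤ) (a : ∀ p, D p (n + 1 - p)),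
      (∃ k : ℤ, ∀ p < k, a p = 0) →
      totd D Dh Dv (n + 1) a = 0 →
      ∃ b : ∀ p, D p (n - p), (∃ k : ℤ, ∀ p < k, b p = 0) ∧ totd D Dh Dv n b = a := by
  rintro n a ⟨k, ha₀⟩ ha
  obtain ⟨b, hb₀, hb⟩ := exists_totd_eq_of_totd_eq_zero hDhh hDvv hDanti hcols ha₀ ha
  exact ⟨b, ⟨k, hb₀⟩, hb⟩
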